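/- arXiv:0709.0011 — 2 statements merged into one kernel-verified Lean document; each statement's English description precedes it below -/
import Mathlib

section
/- Let (m_n) be the moment sequence determined over C = ℂ×ℂ by cumulants κ_n = (1,1) for n = 2 and κ_n = 0 otherwise, via m_n = Σ_{π∈NC(n)} Π_{B∈π} κ_{|B|}. Then the second component 𝔪_n of m_n is 0 for odd n and equals C(2k, k+1) for n = 2k. -/
open scoped Classical

/-- A setoid (partition) of `Fin n` is non-crossing. -/
def NCrel {n : ℕ} (π : Setoid (Fin n)) : Prop :=
  ∀ a b c d : Fin n, a < b → b < c → c < d → π a c → π b d → π a b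

instance setoidFinite {n : ℕ} : Finite (Setoid (Fin n)) :=
  Finite.of_injective (fun s => (s : Fin n → Fin n → Prop))
    (fun a b h => Setoid.ext fun x y => iff_of_eq (congrFun (congrFun h x) y))

noncomputable instance {n : ℕ} : Fintype (Setoid (Fin n)) := Fintype.ofFinite _

/-- The finset of non-crossing partitions of `Fin n`. -/
noncomputable def NCset (n : ℕ) : Finset (Setoid (Fin n)) :=
  Finset.univ.filter NCrel

/-- `Cf_π(h) = ∏_{B block of π} h_{|B|}`. -/
noncomputable def blockProd {R : Type*} [CommRing R] {n : ℕ} (π : Setoid (Fin n))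
    (h : ℕ → R) : R :=
  ∏ B ∈ (Set.toFinite π.classes).toFinset, h B.ncard

/-- moments from cumulants via the non-crossing moment-cumulant formula. -/
noncomputable def moments {R : Type*} [CommRing R] (κ : ℕ → R) (n : ℕ) : R :=
  ∑ π ∈ NCset n, blockProd π κ

/-- interleaving of `π` on positions `2i` and `σ` on positions `2i+1` of `Fin (2n)`. -/
def interleave {n : ℕ} (π σ : Setoid (Fin n)) : Setoid (Fin (2 * n)) :=
  ⟨fun x y => x.val % 2 = y.val % 2 ∧
      (x.val % 2 = 0 → π ⟨x.val / 2, by have := x.isLt; omega⟩ ⟨y.val / 2, by have := y.isLt; omega⟩) ∧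
      (x.val % 2 = 1 → σ ⟨x.val / 2, by have := x.isLt; omega⟩ ⟨y.val / 2, by have := y.isLt; omega⟩),
   by
     constructor
     · intro x; exact ⟨rfl, fun _ => π.iseqv.refl _, fun _ => σ.iseqv.refl _⟩
     · rintro x y ⟨h1, h2, h3⟩
       exact ⟨h1.symm, fun h => π.iseqv.symm (h2 (h1.trans h)),
              fun h => σ.iseqv.symm (h3 (h1.trans h))⟩
     · rintro x y z ⟨h1, h2, h3⟩ ⟨k1, k2, k3⟩
       exact ⟨h1.trans k1, fun h => π.iseqv.trans (h2 h) (k2 (h1 ▸ h)),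
              fun h => σ.iseqv.trans (h3 h) (k3 (h1 ▸ h))⟩⟩

/-- Kreweras complement: the maximal partition of the interlaced primed points
compatible (non-crossing) with `π`. -/
noncomputable def krew {n : ℕ} (π : Setoid (Fin n)) : Setoid (Fin n) :=
  sSup {σ | NCrel (interleave π σ)}

/-- `n`-th coefficient of the boxed convolution `f ⊠ g`. -/
noncomputable def boxCoeff {R : Type*} [CommRing R] (f g : ℕ → R) (n : ℕ) : R :=
  ∑ π ∈ NCset n, blockProd π f * blockProd (krew π) g

/-- `n`-th coefficient of `f ⊻ g`: as in `⊠` but summing only over non-crossing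
partitions having `{1}` as a singleton block. -/
noncomputable def veeCoeff {R : Type*} [CommRing R] (f g : ℕ → R) : ℕ → R
  | 0 => 0
  | (n + 1) =>
    ∑ π ∈ (NCset (n + 1)).filter
        (fun π => ∀ x : Fin (n + 1), π ⟨0, Nat.succ_pos n⟩ x → x = ⟨0, Nat.succ_pos n⟩),
      blockProd π f * blockProd (krew π) g

/-- substitution of formal power series without constant term, on coefficient sequences. -/
noncomputable def compSeq {R : Type*} [CommRing R] (f g : ℕ → R) (m : ℕ) : R :=
  ∑ k ∈ Finset.range (m + 1), f k *
    ∑ x ∈ Finset.Nat.antidiagonalTuple k m, ∏ i, g (x i)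

/-- coefficients of the series `z`. -/
def idSeq {R : Type*} [CommRing R] (n : ℕ) : R := if n = 1 then 1 else 0


/-!
With `κ` supported on `2`, only pair partitions contribute, and a non-crossing pairing of `n`
points contributes `κ₂ ^ (n / 2) = (1 + ε) ^ (n / 2)`, whose second component is `n / 2`. So
`m_n` is the number of non-crossing pairings times `(1 + ε) ^ (n / 2)`; there are none for
odd `n`. For `n = 2k + 2`, the partner `a + 1` of the first point splits a non-crossing pairing
into non-crossing pairings of the `a` points inside that arc and the `b` points to its right,
which is exactly the Catalan recursion, so there are `catalan k` of them on `2k` points. The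
second component is then `k * catalan k = C(2k, k+1)`.
-/

open Finset

def IsPairPartition {α : Type*} (π : Setoid α) : Prop := ∀ B ∈ π.classes, B.ncard = 2

lemma Setoid.sum_ncard_classes {α : Type*} [Fintype α] (π : Setoid α) :
    ∑ B ∈ (Set.toFinite π.classes).toFinset, B.ncard = Fintype.card α := by
  have hdisj : ((Set.toFinite π.classes).toFinset : Set (Set α)).PairwiseDisjoint
      fun B => B.toFinset := by
    intro B hB C hC hne
    simpa [Function.onFun] using
      π.isPartition_classes.pairwiseDisjoint (by simpa using hB) (by simpa using hC) hne
  have hcover : (Set.toFinite π.classes).toFinset.biUnion (fun B => B.toFinset) = univ := by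
    ext x
    simpa using ⟨_, π.mem_classes x, π.refl x⟩
  calc ∑ B ∈ (Set.toFinite π.classes).toFinset, B.ncard
      = ∑ B ∈ (Set.toFinite π.classes).toFinset, B.toFinset.card :=
        sum_congr rfl fun B _ => Set.ncard_eq_toFinset_card' B
    _ = Fintype.card α := by rw [← card_biUnion hdisj, hcover, card_univ]

namespace IsPairPartition

variable {α : Type*} {π : Setoid α}

lemma two_mul_card_classes [Fintype α] (hP : IsPairPartition π) :
    2 * #(Set.toFinite π.classes).toFinset = Fintype.card α := by
  rw [← π.sum_ncard_classes, sum_congr rfl fun B hB => hP B (by simpa using hB),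
    sum_const, smul_eq_mul, mul_comm]

lemma even_card [Fintype α] (hP : IsPairPartition π) : Even (Fintype.card α) :=
  ⟨_, by rw [← hP.two_mul_card_classes, two_mul]⟩

lemma exists_partner (hP : IsPairPartition π) (i : α) : ∃ j ≠ i, ∀ x, π x i ↔ x = i ∨ x = j := by
  obtain ⟨u, v, huv, hB⟩ := Set.ncard_eq_two.mp (hP _ ⟨i, rfl⟩)
  have hmem : ∀ x, π x i ↔ x = u ∨ x = v := fun x => by simpa using Set.ext_iff.mp hB x
  rcases (hmem i).mp (π.refl i) with rfl | rfl
  · exact ⟨v, huv.symm, hmem⟩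
  · exact ⟨u, huv, fun x => (hmem x).trans or_comm⟩

end IsPairPartition

noncomputable def ncPairings (n : ℕ) : Finset (Setoid (Fin n)) :=
  (NCset n).filter IsPairPartition

lemma mem_ncPairings {n : ℕ} {π : Setoid (Fin n)} :
    π ∈ ncPairings n ↔ NCrel π ∧ IsPairPartition π := by
  simp [ncPairings, NCset]

section BlockProd

variable {R : Type*} [CommRing R] {n : ℕ} {π : Setoid (Fin n)} (κ : ℕ → R)

lemma blockProd_of_isPairPartition (hP : IsPairPartition π) : blockProd π κ = κ 2 ^ (n / 2) := by
  have hcard := hP.two_mul_card_classes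
  rw [Fintype.card_fin] at hcard
  rw [blockProd, prod_congr rfl fun B hB => by rw [hP B (by simpa using hB)],
    prod_const]
  congr 1
  omega

lemma blockProd_eq_zero_of_not_isPairPartition {κ : ℕ → R} (hκ : ∀ m ≠ 2, κ m = 0)
    (hP : ¬ IsPairPartition π) : blockProd π κ = 0 := by
  obtain ⟨B, hB, hB2⟩ := not_forall₂.mp hP
  exact prod_eq_zero (by simpa using hB) (hκ _ hB2)

lemma moments_eq_card_ncPairings_nsmul {κ : ℕ → R} (hκ : ∀ m ≠ 2, κ m = 0) (n : ℕ) :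
    moments κ n = #(ncPairings n) • κ 2 ^ (n / 2) := by
  rw [moments, ← sum_filter_add_sum_filter_not (NCset n) IsPairPartition,
    sum_eq_zero fun π hπ => blockProd_eq_zero_of_not_isPairPartition hκ
      (mem_filter.mp hπ).2, add_zero, ← ncPairings,
    sum_congr rfl fun π hπ => blockProd_of_isPairPartition κ (mem_ncPairings.mp hπ).2,
    sum_const]

end BlockProd

def Setoid.IsSaturated {β : Type*} (π : Setoid β) (s : Set β) : Prop :=
  ∀ ⦃x y⦄, π x y → x ∈ s → y ∈ s

section Comap

variable {α β : Type*} {f : α → β} {π σ : Setoid β}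

lemma Setoid.IsSaturated.image_setOf_comap (hs : π.IsSaturated (Set.range f)) (v : α) :
    f '' {u | π.comap f u v} = {x | π x (f v)} := by
  ext x
  constructor
  · rintro ⟨u, hu, rfl⟩
    exact hu
  · intro hx
    obtain ⟨u, rfl⟩ := hs (π.symm hx) ⟨v, rfl⟩
    exact ⟨u, hx, rfl⟩

lemma Setoid.IsSaturated.rel_iff_of_comap_eq (hπ : π.IsSaturated (Set.range f))
    (hσ : σ.IsSaturated (Set.range f)) (h : π.comap f = σ.comap f) (u : α) (y : β) :
    π (f u) y ↔ σ (f u) y := by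
  constructor
  · intro hy
    obtain ⟨v, rfl⟩ := hπ hy ⟨u, rfl⟩
    exact (Setoid.ext_iff.mp h u v).mp hy
  · intro hy
    obtain ⟨v, rfl⟩ := hσ hy ⟨u, rfl⟩
    exact (Setoid.ext_iff.mp h u v).mpr hy

lemma Setoid.IsSaturated.ncard_setOf_comap (hs : π.IsSaturated (Set.range f))
    (hf : Function.Injective f) (v : α) :
    {u | π.comap f u v}.ncard = {x | π x (f v)}.ncard := by
  rw [← Set.ncard_image_of_injective _ hf, hs.image_setOf_comap]

lemma IsPairPartition.comap (hP : IsPairPartition π) (hf : Function.Injective f)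
    (hs : π.IsSaturated (Set.range f)) : IsPairPartition (π.comap f) := by
  rintro B ⟨v, rfl⟩
  rw [hs.ncard_setOf_comap hf]
  exact hP _ ⟨_, rfl⟩

lemma NCrel.comap {k n : ℕ} {π : Setoid (Fin n)} {f : Fin k → Fin n} (hπ : NCrel π)
    (hf : StrictMono f) : NCrel (π.comap f) :=
  fun _ _ _ _ hab hbc hcd hac hbd => hπ _ _ _ _ (hf hab) (hf hbc) (hf hcd) hac hbd

lemma Setoid.IsSaturated.ncrel_of_mem_range {k n : ℕ} {π : Setoid (Fin n)} {f : Fin k → Fin n}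
    (hs : π.IsSaturated (Set.range f)) (hconn : (Set.range f).OrdConnected) (hf : StrictMono f)
    (hNC : NCrel (π.comap f)) {x y z w : Fin n} (hxy : x < y) (hyz : y < z) (hzw : z < w)
    (hxz : π x z) (hyw : π y w) (hx : x ∈ Set.range f) : π x y := by
  obtain ⟨x, rfl⟩ := hx
  obtain ⟨z, rfl⟩ := hs hxz ⟨x, rfl⟩
  obtain ⟨y, rfl⟩ := hconn.out ⟨x, rfl⟩ ⟨z, rfl⟩ ⟨hxy.le, hyz.le⟩
  obtain ⟨w, rfl⟩ := hs hyw ⟨y, rfl⟩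
  exact hNC x y z w (hf.lt_iff_lt.mp hxy) (hf.lt_iff_lt.mp hyz) (hf.lt_iff_lt.mp hzw) hxz hyw

end Comap

def shiftEmb (s : ℕ) {k n : ℕ} (h : s + k ≤ n) (u : Fin k) : Fin n := ⟨u.val + s, by omega⟩

section ShiftEmb

variable {s k n : ℕ} (h : s + k ≤ n)

@[simp] lemma shiftEmb_val (u : Fin k) : (shiftEmb s h u).val = u.val + s := rfl

lemma shiftEmb_strictMono : StrictMono (shiftEmb s h) :=
  fun u v huv => by
    rw [Fin.lt_def] at huv ⊢
    simp only [shiftEmb_val]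
    omega

lemma mem_range_shiftEmb {x : Fin n} :
    x ∈ Set.range (shiftEmb s h) ↔ s ≤ x.val ∧ x.val < s + k := by
  constructor
  · rintro ⟨u, rfl⟩
    simp only [shiftEmb_val]
    omega
  · intro hx
    exact ⟨⟨x.val - s, by omega⟩, Fin.ext (by simp only [shiftEmb_val]; omega)⟩

lemma ordConnected_range_shiftEmb :
    (Set.range (shiftEmb s h)).OrdConnected := by
  refine ⟨fun x hx z hz y hy => ?_⟩
  rw [mem_range_shiftEmb] at hx hz ⊢
  rw [Set.mem_Icc, Fin.le_def, Fin.le_def] at hy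
  omega

end ShiftEmb

/-- The pairing block `{0, a + 1}`, with `π₁` shifted onto the `a` points `1, …, a` inside it and
`π₂` onto the `b` points `a + 2, …, n - 1` to its right. -/
def glue {a b n : ℕ} (h : n = a + b + 2) (π₁ : Setoid (Fin a)) (π₂ : Setoid (Fin b)) :
    Setoid (Fin n) where
  r x y :=
    ((x.val = 0 ∨ x.val = a + 1) ∧ (y.val = 0 ∨ y.val = a + 1)) ∨
    (∃ (_ : 1 ≤ x.val ∧ x.val ≤ a) (_ : 1 ≤ y.val ∧ y.val ≤ a),
      π₁ ⟨x.val - 1, by omega⟩ ⟨y.val - 1, by omega⟩) ∨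
    (∃ (_ : a + 2 ≤ x.val) (_ : a + 2 ≤ y.val),
      π₂ ⟨x.val - (a + 2), by have := x.isLt; omega⟩ ⟨y.val - (a + 2), by have := y.isLt; omega⟩)
  iseqv := by
    constructor
    · intro x
      by_cases hx₀ : x.val = 0 ∨ x.val = a + 1
      · exact Or.inl ⟨hx₀, hx₀⟩
      by_cases hx₁ : x.val ≤ a
      · exact Or.inr (Or.inl ⟨by omega, by omega, π₁.refl _⟩)
      · exact Or.inr (Or.inr ⟨by omega, by omega, π₂.refl _⟩)
    · rintro x y (⟨hx, hy⟩ | ⟨hx, hy, hxy⟩ | ⟨hx, hy, hxy⟩)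
      · exact Or.inl ⟨hy, hx⟩
      · exact Or.inr (Or.inl ⟨hy, hx, π₁.symm hxy⟩)
      · exact Or.inr (Or.inr ⟨hy, hx, π₂.symm hxy⟩)
    · rintro x y z (⟨hx, hy⟩ | ⟨hx, hy, hxy⟩ | ⟨hx, hy, hxy⟩)
        (⟨hy', hz⟩ | ⟨hy', hz, hyz⟩ | ⟨hy', hz, hyz⟩) <;>
        first
        | omega
        | exact Or.inl ⟨hx, hz⟩
        | exact Or.inr (Or.inl ⟨hx, hz, π₁.trans hxy hyz⟩)
        | exact Or.inr (Or.inr ⟨hx, hz, π₂.trans hxy hyz⟩)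

section Glue

variable {a b n : ℕ} (h : n = a + b + 2) (π₁ : Setoid (Fin a)) (π₂ : Setoid (Fin b))
include h

lemma glue_cases (x : Fin n) :
    (x.val = 0 ∨ x.val = a + 1) ∨ x ∈ Set.range (shiftEmb 1 (by omega : 1 + a ≤ n)) ∨
      x ∈ Set.range (shiftEmb (a + 2) (by omega : a + 2 + b ≤ n)) := by
  rw [mem_range_shiftEmb, mem_range_shiftEmb]
  omega

lemma glue_rel_iff_of_mem_pair {x : Fin n} (hx : x.val = 0 ∨ x.val = a + 1) (y : Fin n) :
    glue h π₁ π₂ x y ↔ y.val = 0 ∨ y.val = a + 1 := by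
  constructor
  · rintro (⟨-, hy⟩ | ⟨hx', -⟩ | ⟨hx', -⟩) <;> omega
  · exact fun hy => Or.inl ⟨hx, hy⟩

lemma glue_comap_left : (glue h π₁ π₂).comap (shiftEmb 1 (by omega : 1 + a ≤ n)) = π₁ := by
  ext u v
  rw [Setoid.comap_rel]
  constructor
  · rintro (⟨hu, -⟩ | ⟨_, _, huv⟩ | ⟨hu, -⟩)
    · simp only [shiftEmb_val] at hu; omega
    · simpa using huv
    · simp only [shiftEmb_val] at hu; omega
  · intro huv
    exact Or.inr (Or.inl ⟨by simp only [shiftEmb_val]; omega, by simp only [shiftEmb_val]; omega,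
      by simpa using huv⟩)

lemma glue_comap_right :
    (glue h π₁ π₂).comap (shiftEmb (a + 2) (by omega : a + 2 + b ≤ n)) = π₂ := by
  ext u v
  rw [Setoid.comap_rel]
  constructor
  · rintro (⟨hu, -⟩ | ⟨hu, -⟩ | ⟨_, _, huv⟩)
    · simp only [shiftEmb_val] at hu; omega
    · simp only [shiftEmb_val] at hu; omega
    · simpa using huv
  · intro huv
    exact Or.inr (Or.inr ⟨by simp only [shiftEmb_val]; omega, by simp only [shiftEmb_val]; omega,
      by simpa using huv⟩)

lemma isSaturated_glue_left :
    (glue h π₁ π₂).IsSaturated (Set.range (shiftEmb 1 (by omega : 1 + a ≤ n))) := by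
  intro x y hxy hx
  rw [mem_range_shiftEmb] at hx ⊢
  rcases hxy with ⟨hx', -⟩ | ⟨-, hy, -⟩ | ⟨hx', -⟩ <;> omega

lemma isSaturated_glue_right :
    (glue h π₁ π₂).IsSaturated (Set.range (shiftEmb (a + 2) (by omega : a + 2 + b ≤ n))) := by
  intro x y hxy hx
  rw [mem_range_shiftEmb] at hx ⊢
  rcases hxy with ⟨hx', -⟩ | ⟨hx', -⟩ | ⟨-, hy, -⟩ <;> omega

variable {π₁ π₂}

lemma ncrel_glue (h₁ : NCrel π₁) (h₂ : NCrel π₂) : NCrel (glue h π₁ π₂) := by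
  intro x y z w hxy hyz hzw hxz hyw
  rcases glue_cases h x with hx | hx | hx
  · have hz := (glue_rel_iff_of_mem_pair h π₁ π₂ hx z).mp hxz
    have hy : y ∈ Set.range (shiftEmb 1 (by omega : 1 + a ≤ n)) := by
      rw [Fin.lt_def] at hxy hyz
      rw [mem_range_shiftEmb]
      omega
    have hw := mem_range_shiftEmb _ |>.mp (isSaturated_glue_left h π₁ π₂ hyw hy)
    rw [Fin.lt_def] at hxy hyz hzw
    omega
  · exact (isSaturated_glue_left h π₁ π₂).ncrel_of_mem_range (ordConnected_range_shiftEmb _)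
      (shiftEmb_strictMono _) (by rwa [glue_comap_left]) hxy hyz hzw hxz hyw hx
  · exact (isSaturated_glue_right h π₁ π₂).ncrel_of_mem_range (ordConnected_range_shiftEmb _)
      (shiftEmb_strictMono _) (by rwa [glue_comap_right]) hxy hyz hzw hxz hyw hx

lemma isPairPartition_glue (h₁ : IsPairPartition π₁) (h₂ : IsPairPartition π₂) :
    IsPairPartition (glue h π₁ π₂) := by
  rintro B ⟨y, rfl⟩
  rcases glue_cases h y with hy | ⟨v, rfl⟩ | ⟨v, rfl⟩
  · have hB : {x | glue h π₁ π₂ x y} = {⟨0, by omega⟩, ⟨a + 1, by omega⟩} := by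
      ext x
      rw [Set.mem_ofPred_eq, Setoid.comm', glue_rel_iff_of_mem_pair h π₁ π₂ hy]
      simp [Fin.ext_iff]
    rw [hB, Set.ncard_pair (by simp [Fin.ext_iff])]
  · rw [← (isSaturated_glue_left h π₁ π₂).ncard_setOf_comap (shiftEmb_strictMono _).injective,
      glue_comap_left]
    exact h₁ _ ⟨v, rfl⟩
  · rw [← (isSaturated_glue_right h π₁ π₂).ncard_setOf_comap (shiftEmb_strictMono _).injective,
      glue_comap_right]
    exact h₂ _ ⟨v, rfl⟩

lemma sizes_eq_of_glue_eq {a' b' : ℕ} (h' : n = a' + b' + 2) {π₁' : Setoid (Fin a')}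
    {π₂' : Setoid (Fin b')} (heq : glue h π₁ π₂ = glue h' π₁' π₂') :
    a = a' ∧ b = b' := by
  have hrel : glue h π₁ π₂ ⟨0, by omega⟩ ⟨a' + 1, by omega⟩ := by
    rw [heq, glue_rel_iff_of_mem_pair h' π₁' π₂' (Or.inl rfl)]
    exact Or.inr rfl
  rw [glue_rel_iff_of_mem_pair h π₁ π₂ (Or.inl rfl), Fin.val_mk] at hrel
  omega

end Glue

section NoncrossingBlock

variable {n : ℕ} {π : Setoid (Fin n)} {i j : Fin n}

lemma NCrel.isSaturated_Ioo (hπ : NCrel π) (hij : i < j)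
    (hblock : ∀ x, π x i ↔ x = i ∨ x = j) : π.IsSaturated (Set.Ioo i j) := by
  have hji : π j i := (hblock j).mpr (Or.inr rfl)
  rintro x y hxy ⟨hix, hxj⟩
  have hx : ¬ π x i := fun hxi => by
    rcases (hblock x).mp hxi with rfl | rfl
    · exact lt_irrefl _ hix
    · exact lt_irrefl _ hxj
  by_contra hy
  rcases lt_trichotomy y i with hyi | rfl | hiy
  · exact hx (π.trans hxy (hπ y i x j hyi hix hxj (π.symm hxy) (π.symm hji)))
  · exact hx hxy
  rcases lt_trichotomy y j with hyj | rfl | hjy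
  · exact hy ⟨hiy, hyj⟩
  · exact hx (π.trans hxy hji)
  · exact hx (π.symm (hπ i x j y hix hxj hjy (π.symm hji) hxy))

lemma NCrel.isSaturated_Ioi (hπ : NCrel π) (hij : i < j)
    (hblock : ∀ x, π x i ↔ x = i ∨ x = j) (hi : ∀ x, i ≤ x) : π.IsSaturated (Set.Ioi j) := by
  have hji : π j i := (hblock j).mpr (Or.inr rfl)
  intro x y hxy (hjx : j < x)
  have hx : ¬ π x i := fun hxi => by
    rcases (hblock x).mp hxi with rfl | rfl
    · exact lt_asymm hij hjx
    · exact lt_irrefl _ hjx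
  by_contra hy
  rw [Set.mem_Ioi, not_lt] at hy
  rcases (hi y).lt_or_eq with hiy | rfl
  · rcases hy.lt_or_eq with hyj | rfl
    · exact lt_asymm hjx (hπ.isSaturated_Ioo hij hblock (π.symm hxy) ⟨hiy, hyj⟩).2
    · exact hx (π.trans hxy hji)
  · exact hx hxy

end NoncrossingBlock

lemma exists_glue_eq {n : ℕ} (hn : 0 < n) {π : Setoid (Fin n)} (hπ : π ∈ ncPairings n) :
    ∃ (a b : ℕ) (h : n = a + b + 2) (π₁ : Setoid (Fin a)) (π₂ : Setoid (Fin b)),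
      π₁ ∈ ncPairings a ∧ π₂ ∈ ncPairings b ∧ glue h π₁ π₂ = π := by
  obtain ⟨hNC, hP⟩ := mem_ncPairings.mp hπ
  obtain ⟨j, hji, hblock⟩ := hP.exists_partner ⟨0, hn⟩
  obtain ⟨a, ha⟩ : ∃ a, j.val = a + 1 :=
    Nat.exists_eq_add_one.mpr (Nat.pos_of_ne_zero fun h0 => hji (Fin.ext h0))
  obtain ⟨b, h⟩ : ∃ b, n = a + b + 2 := ⟨n - a - 2, by have := j.isLt; omega⟩
  have hij : (⟨0, hn⟩ : Fin n) < j := Fin.lt_def.mpr (by simp only [ha]; omega)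
  have hleft : π.IsSaturated (Set.range (shiftEmb 1 (by omega : 1 + a ≤ n))) := by
    convert hNC.isSaturated_Ioo hij hblock using 1
    ext x
    simp only [mem_range_shiftEmb, Set.mem_Ioo, Fin.lt_def]
    omega
  have hright : π.IsSaturated (Set.range (shiftEmb (a + 2) (by omega : a + 2 + b ≤ n))) := by
    convert hNC.isSaturated_Ioi hij hblock (fun x => Fin.le_def.mpr (Nat.zero_le _)) using 1
    ext x
    rw [mem_range_shiftEmb, Set.mem_Ioi, Fin.lt_def]
    omega
  refine ⟨a, b, h, _, _,
    mem_ncPairings.mpr ⟨hNC.comap (shiftEmb_strictMono _),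
      hP.comap (shiftEmb_strictMono _).injective hleft⟩,
    mem_ncPairings.mpr ⟨hNC.comap (shiftEmb_strictMono _),
      hP.comap (shiftEmb_strictMono _).injective hright⟩, ?_⟩
  ext x y
  rcases glue_cases h x with hx | ⟨u, rfl⟩ | ⟨u, rfl⟩
  · have hxi : π x ⟨0, hn⟩ := (hblock x).mpr (by simp only [Fin.ext_iff, ha]; omega)
    have hxy : π x y ↔ π y ⟨0, hn⟩ :=
      ⟨fun hxy => π.trans (π.symm hxy) hxi, fun hy => π.trans hxi (π.symm hy)⟩
    rw [glue_rel_iff_of_mem_pair h _ _ hx, hxy, hblock y]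
    simp only [Fin.ext_iff, ha]
  · exact (isSaturated_glue_left h _ _).rel_iff_of_comap_eq hleft (glue_comap_left h _ _) u y
  · exact (isSaturated_glue_right h _ _).rel_iff_of_comap_eq hright (glue_comap_right h _ _) u y

lemma even_of_mem_ncPairings {n : ℕ} {π : Setoid (Fin n)} (hπ : π ∈ ncPairings n) : Even n := by
  simpa using (mem_ncPairings.mp hπ).2.even_card

lemma ncPairings_eq_empty_of_odd {n : ℕ} (hn : Odd n) : ncPairings n = ∅ :=
  eq_empty_of_forall_notMem fun _ hπ =>
    Nat.not_even_iff_odd.mpr hn (even_of_mem_ncPairings hπ)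

lemma card_ncPairings_zero : #(ncPairings 0) = 1 := by
  refine card_eq_one.mpr ⟨⊥, eq_singleton_iff_unique_mem.mpr ⟨?_, ?_⟩⟩
  · refine mem_ncPairings.mpr ⟨fun x => x.elim0, ?_⟩
    rintro B ⟨x, -⟩
    exact x.elim0
  · exact fun π _ => Setoid.ext fun x => x.elim0

lemma card_ncPairings_two_mul_add_two (k : ℕ) :
    #(ncPairings (2 * k + 2)) =
      ∑ ij ∈ antidiagonal k, #(ncPairings (2 * ij.1)) * #(ncPairings (2 * ij.2)) := by
  simp_rw [← card_product]
  rw [← card_sigma]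
  symm
  set S := (antidiagonal k).sigma fun ij => ncPairings (2 * ij.1) ×ˢ ncPairings (2 * ij.2)
  have hsize : ∀ p ∈ S, 2 * k + 2 = 2 * p.1.1 + 2 * p.1.2 + 2 := fun p hp => by
    have := mem_antidiagonal.mp (mem_sigma.mp hp).1
    omega
  refine card_bij (fun p hp => glue (hsize p hp) p.2.1 p.2.2) ?_ ?_ ?_
  · rintro ⟨⟨i, j⟩, π₁, π₂⟩ hp
    obtain ⟨h₁, h₂⟩ := mem_product.mp (mem_sigma.mp hp).2
    obtain ⟨hNC₁, hP₁⟩ := mem_ncPairings.mp h₁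
    obtain ⟨hNC₂, hP₂⟩ := mem_ncPairings.mp h₂
    exact mem_ncPairings.mpr ⟨ncrel_glue _ hNC₁ hNC₂, isPairPartition_glue _ hP₁ hP₂⟩
  · rintro ⟨⟨i, j⟩, π₁, π₂⟩ hp ⟨⟨i', j'⟩, π₁', π₂'⟩ _ heq
    dsimp only at heq
    obtain ⟨hi, hj⟩ := sizes_eq_of_glue_eq _ _ heq
    obtain rfl : i = i' := by omega
    obtain rfl : j = j' := by omega
    have h := hsize _ hp
    rw [← glue_comap_left h π₁ π₂, heq, glue_comap_left, ← glue_comap_right h π₁ π₂, heq,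
      glue_comap_right]
  · intro π hπ
    obtain ⟨a, b, h, π₁, π₂, h₁, h₂, rfl⟩ := exists_glue_eq (by omega) hπ
    obtain ⟨i, rfl⟩ := even_iff_two_dvd.mp (even_of_mem_ncPairings h₁)
    obtain ⟨j, rfl⟩ := even_iff_two_dvd.mp (even_of_mem_ncPairings h₂)
    refine ⟨⟨(i, j), π₁, π₂⟩, mem_sigma.mpr ⟨?_, mem_product.mpr ⟨h₁, h₂⟩⟩, rfl⟩
    exact mem_antidiagonal.mpr (by dsimp only; omega)

lemma card_ncPairings_two_mul (k : ℕ) : #(ncPairings (2 * k)) = catalan k := by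
  induction k using Nat.strong_induction_on with
  | _ k ih =>
    rcases k with _ | k
    · exact card_ncPairings_zero.trans catalan_zero.symm
    · rw [Nat.mul_succ, card_ncPairings_two_mul_add_two, catalan_succ']
      refine sum_congr rfl fun ij hij => ?_
      have := mem_antidiagonal.mp hij
      rw [ih ij.1 (by omega), ih ij.2 (by omega)]

lemma DualNumber.snd_one_add_eps_pow {R : Type*} [CommSemiring R] (k : ℕ) :
    ((1 + DualNumber.eps : DualNumber R) ^ k).snd = k := by
  simp [TrivSqZeroExt.snd_pow]

lemma Nat.choose_two_mul_succ_eq_mul_catalan (k : ℕ) :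
    (2 * k).choose (k + 1) = k * catalan k := by
  have h := Nat.choose_succ_right_eq (2 * k) k
  rw [show 2 * k - k = k by omega, ← Nat.centralBinom_eq_two_mul_choose,
    ← succ_mul_catalan_eq_centralBinom] at h
  exact Nat.eq_of_mul_eq_mul_right (by omega : 0 < k + 1) (h.trans (by ring))

/-- The moment sequence over `C = ℂ×ℂ` (the dual numbers over `ℂ`) determined by the
cumulants `κ₂ = (1,1)`, `κ_n = 0` otherwise, has second components `0` in odd degrees
and `C(2k, k+1)` in degree `2k`. -/
theorem typeB_clt_second_components (κ : ℕ → DualNumber ℂ)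
    (hκ : ∀ n, κ n = if n = 2 then 1 + DualNumber.eps else 0) :
    (∀ n, Odd n → (moments κ n).snd = 0) ∧
    (∀ k : ℕ, (moments κ (2 * k)).snd = (Nat.choose (2 * k) (k + 1) : ℂ)) := by
  have hκ₀ : ∀ m ≠ 2, κ m = 0 := fun m hm => by rw [hκ, if_neg hm]
  have hκ₂ : κ 2 = 1 + DualNumber.eps := by rw [hκ, if_pos rfl]
  refine ⟨fun n hn => ?_, fun k => ?_⟩
  · rw [moments_eq_card_ncPairings_nsmul hκ₀, ncPairings_eq_empty_of_odd hn, card_empty,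
      zero_smul, TrivSqZeroExt.snd_zero]
  · rw [moments_eq_card_ncPairings_nsmul hκ₀, card_ncPairings_two_mul, hκ₂,
      Nat.mul_div_cancel_left k two_pos, TrivSqZeroExt.snd_smul, DualNumber.snd_one_add_eps_pow,
      Nat.choose_two_mul_succ_eq_mul_catalan, nsmul_eq_mul]
    push_cast
    ring
end

section
/- Let α ≠ 0 be real and define 𝔪₂ = 2(λ+λ²)α², 𝔪₃ = 3(λ+3λ²+λ³)α³, 𝔪₄ = 4(λ+6λ²+6λ³+λ⁴)α⁴. Then for all sufficiently small λ > 0, the Hamburger moment inequality 𝔪₂·𝔪₄ ≥ 𝔪₃² fails; hence (𝔪_n) is not the moment sequence of a positive Borel measure on ℝ. -/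
open MeasureTheory

/-- The discriminant of the nonnegative quadratic `t ↦ ∫ (t f + g)²` is nonpositive. -/
theorem sq_integral_mul_le_integral_sq_mul_integral_sq {Ω : Type*} [MeasurableSpace Ω]
    {μ : Measure Ω} {f g : Ω → ℝ} (hf : Integrable (fun ω => f ω ^ 2) μ)
    (hfg : Integrable (fun ω => f ω * g ω) μ) (hg : Integrable (fun ω => g ω ^ 2) μ) :
    (∫ ω, f ω * g ω ∂μ) ^ 2 ≤ (∫ ω, f ω ^ 2 ∂μ) * ∫ ω, g ω ^ 2 ∂μ := by
  have hquad : ∀ t : ℝ,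
      0 ≤ (∫ ω, f ω ^ 2 ∂μ) * (t * t) + 2 * (∫ ω, f ω * g ω ∂μ) * t + ∫ ω, g ω ^ 2 ∂μ := by
    intro t
    calc 0 ≤ ∫ ω, (t * f ω + g ω) ^ 2 ∂μ := integral_nonneg fun ω => sq_nonneg _
      _ = ∫ ω, (t ^ 2 * f ω ^ 2 + 2 * t * (f ω * g ω) + g ω ^ 2) ∂μ := by
          congr with ω; ring
      _ = _ := by
          have hsum : Integrable (fun ω => t ^ 2 * f ω ^ 2 + 2 * t * (f ω * g ω)) μ :=
            (hf.const_mul _).add (hfg.const_mul _)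
          rw [integral_add hsum hg,
            integral_add (hf.const_mul _) (hfg.const_mul _), integral_const_mul,
            integral_const_mul]
          ring
  have hdisc := discrim_le_zero hquad
  rw [discrim] at hdisc
  linarith

theorem sq_integral_pow_three_le {μ : Measure ℝ} (h2 : Integrable (fun x : ℝ => x ^ 2) μ)
    (h3 : Integrable (fun x : ℝ => x ^ 3) μ) (h4 : Integrable (fun x : ℝ => x ^ 4) μ) :
    (∫ x, x ^ 3 ∂μ) ^ 2 ≤ (∫ x, x ^ 2 ∂μ) * ∫ x, x ^ 4 ∂μ := by
  have hpow : (fun x : ℝ => x * x ^ 2) = (· ^ 3) ∧ (fun x : ℝ => (x ^ 2) ^ 2) = (· ^ 4) :=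
    ⟨funext fun x => by ring, funext fun x => by ring⟩
  have := sq_integral_mul_le_integral_sq_mul_integral_sq (f := id) (g := (· ^ 2)) (μ := μ)
    h2 (hpow.1 ▸ h3) (hpow.2 ▸ h4)
  simpa only [id, hpow.1, hpow.2] using this

theorem typeB_moment_hankel_lt {α lam : ℝ} (hα : α ≠ 0) (hlam : lam ≠ 0) :
    (2 * (lam + lam ^ 2) * α ^ 2) * (4 * (lam + 6 * lam ^ 2 + 6 * lam ^ 3 + lam ^ 4) * α ^ 4)
      < (3 * (lam + 3 * lam ^ 2 + lam ^ 3) * α ^ 3) ^ 2 := by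
  have hdefect : (3 * (lam + 3 * lam ^ 2 + lam ^ 3) * α ^ 3) ^ 2
      - (2 * (lam + lam ^ 2) * α ^ 2) * (4 * (lam + 6 * lam ^ 2 + 6 * lam ^ 3 + lam ^ 4) * α ^ 4)
      = (α ^ 3 * lam * (1 - lam + lam ^ 2)) ^ 2 := by ring
  have hroot : 1 - lam + lam ^ 2 ≠ 0 := by nlinarith [sq_nonneg (lam - 1 / 2)]
  have : 0 < (α ^ 3 * lam * (1 - lam + lam ^ 2)) ^ 2 := by positivity
  linarith

/-- Let `α ≠ 0` and `𝔪₂ = 2(λ+λ²)α²`, `𝔪₃ = 3(λ+3λ²+λ³)α³`,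
`𝔪₄ = 4(λ+6λ²+6λ³+λ⁴)α⁴`.  For all sufficiently small `λ > 0` the Hamburger moment
inequality `𝔪₂𝔪₄ ≥ 𝔪₃²` fails; hence these are not moments of a positive Borel
measure on `ℝ`. -/
theorem typeB_poisson_not_moment_sequence (α : ℝ) (hα : α ≠ 0) :
    ∃ lam0 > (0 : ℝ), ∀ lam : ℝ, 0 < lam → lam < lam0 →
      (2 * (lam + lam ^ 2) * α ^ 2) * (4 * (lam + 6 * lam ^ 2 + 6 * lam ^ 3 + lam ^ 4) * α ^ 4)
        < (3 * (lam + 3 * lam ^ 2 + lam ^ 3) * α ^ 3) ^ 2 ∧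
      ¬ ∃ μ : Measure ℝ,
          (∫ x, x ^ 2 ∂μ = 2 * (lam + lam ^ 2) * α ^ 2) ∧
          (∫ x, x ^ 3 ∂μ = 3 * (lam + 3 * lam ^ 2 + lam ^ 3) * α ^ 3) ∧
          (∫ x, x ^ 4 ∂μ = 4 * (lam + 6 * lam ^ 2 + 6 * lam ^ 3 + lam ^ 4) * α ^ 4) ∧
          (Integrable (fun x : ℝ => x ^ 2) μ) ∧ (Integrable (fun x : ℝ => x ^ 3) μ) ∧
          (Integrable (fun x : ℝ => x ^ 4) μ) := by
  refine ⟨1, one_pos, fun lam hlam _ => ?_⟩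
  have hfail := typeB_moment_hankel_lt hα hlam.ne'
  refine ⟨hfail, ?_⟩
  rintro ⟨μ, hm2, hm3, hm4, h2, h3, h4⟩
  have hcs := sq_integral_pow_three_le h2 h3 h4
  rw [hm2, hm3, hm4] at hcs
  exact hfail.not_ge hcs
end
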